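/- arXiv:1509.04796 — 5 statements merged into one kernel-verified Lean document; each statement's English description precedes it below -/
import Mathlib

section
/- Let G be a transitive subgroup of the symmetric group on a finite set Ω, and let G_d be the stabilizer in G of a point d ∈ Ω. Then the centralizer of G in S_Ω is isomorphic to the quotient N_G(G_d)/G_d of the normalizer of G_d in G by G_d. -/
/-!
A permutation `τ` commuting with a transitive action is determined by `τ d`, and `g • d ↦ g • e`
defines such a permutation exactly when `stabilizer G e = stabilizer G d`. Writing `e = n⁻¹ • d`,
this says that `n` normalizes `G_d`, and `n` is determined by `e` up to `G_d`.
-/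

open Equiv MulAction Subgroup

namespace MulAction

variable {G α : Type*} [Group G] [MulAction G α]

theorem mem_normalizer_stabilizer_iff {g : G} {a : α} :
    g ∈ normalizer (stabilizer G a : Set G) ↔ stabilizer G (g • a) = stabilizer G a := by
  rw [mem_normalizer_iff_map_conj_eq, stabilizer_smul_eq_stabilizer_map_conj]
  rfl

theorem smul_eq_smul_of_stabilizer_le {a b : α} (hab : stabilizer G a ≤ stabilizer G b)
    {g k : G} (h : g • a = k • a) : g • b = k • b := by
  have hka : k⁻¹ * g ∈ stabilizer G a := by
    rw [mem_stabilizer_iff, mul_smul, h, inv_smul_smul]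
  rw [← inv_smul_eq_iff, ← mul_smul]
  exact hab hka

theorem mem_centralizer_range_toPermHom_iff {τ : Perm α} :
    τ ∈ centralizer ((toPermHom G α).range : Set (Perm α)) ↔
      ∀ (g : G) (x : α), τ (g • x) = g • τ x := by
  simp only [mem_centralizer_iff, MonoidHom.coe_range, Set.forall_mem_range, Perm.ext_iff,
    Perm.mul_apply, toPermHom_apply, toPerm_apply]
  exact forall_congr' fun g => forall_congr' fun x => eq_comm

theorem stabilizer_apply_eq_of_commute {τ : Perm α}
    (hτ : ∀ (g : G) (x : α), τ (g • x) = g • τ x) (a : α) :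
    stabilizer G (τ a) = stabilizer G a := by
  ext g
  rw [mem_stabilizer_iff, mem_stabilizer_iff, ← hτ, τ.injective.eq_iff]

variable (G) [IsPretransitive G α]

/-- `g • a ↦ g • b`, via a chosen `g`; independent of the choice (and `G`-equivariant) only when
`stabilizer G a ≤ stabilizer G b`. -/
noncomputable def extendPoint (a b x : α) : α :=
  (exists_smul_eq G a x).choose • b

theorem funext_smul {β : Type*} {f f' : α → β} (a : α) (h : ∀ g : G, f (g • a) = f' (g • a)) :
    f = f' := by
  funext x
  obtain ⟨g, rfl⟩ := exists_smul_eq G a x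
  exact h g

variable {G}

theorem extendPoint_smul {a b : α} (hab : stabilizer G a ≤ stabilizer G b) (g : G) :
    extendPoint G a b (g • a) = g • b :=
  smul_eq_smul_of_stabilizer_le hab (exists_smul_eq G a (g • a)).choose_spec

theorem extendPoint_smul_comm {a b : α} (hab : stabilizer G a ≤ stabilizer G b) (g : G) (x : α) :
    extendPoint G a b (g • x) = g • extendPoint G a b x := by
  obtain ⟨k, rfl⟩ := exists_smul_eq G a x
  rw [← mul_smul, extendPoint_smul hab, extendPoint_smul hab, mul_smul]

theorem extendPoint_inv_smul_smul {d : α} {n : G} (hn : n ∈ normalizer (stabilizer G d : Set G))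
    (g : G) : extendPoint G d (n⁻¹ • d) (g • d) = (g * n⁻¹) • d := by
  rw [extendPoint_smul (mem_normalizer_stabilizer_iff.mp (inv_mem hn)).ge, mul_smul]

variable (G) (d : α)

noncomputable def normalizerStabilizerToEnd :
    normalizer (stabilizer G d : Set G) →* Function.End α where
  toFun n := extendPoint G d ((n : G)⁻¹ • d)
  map_one' := funext_smul G d fun g => by
    show extendPoint G d ((1 : G)⁻¹ • d) (g • d) = g • d
    rw [extendPoint_inv_smul_smul (one_mem _), inv_one, mul_one]
  map_mul' n m := funext_smul G d fun g => by
    show extendPoint G d _ (g • d) = extendPoint G d _ (extendPoint G d _ (g • d))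
    rw [extendPoint_inv_smul_smul (n * m).2, extendPoint_inv_smul_smul m.2,
      extendPoint_inv_smul_smul n.2, Subgroup.coe_mul, mul_inv_rev, mul_assoc]

noncomputable def normalizerStabilizerToCentralizer :
    normalizer (stabilizer G d : Set G) →* centralizer ((toPermHom G α).range : Set (Perm α)) :=
  (normalizerStabilizerToEnd G d).toHomPerm.codRestrict _ fun n =>
    mem_centralizer_range_toPermHom_iff.mpr
      (extendPoint_smul_comm (mem_normalizer_stabilizer_iff.mp (inv_mem n.2)).ge)

theorem normalizerStabilizerToCentralizer_apply_smul (n : normalizer (stabilizer G d : Set G))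
    (g : G) : (normalizerStabilizerToCentralizer G d n : Perm α) (g • d) = (g * (n : G)⁻¹) • d :=
  extendPoint_inv_smul_smul n.2 g

theorem ker_normalizerStabilizerToCentralizer :
    (normalizerStabilizerToCentralizer G d).ker =
      (stabilizer G d).subgroupOf (normalizer (stabilizer G d : Set G)) := by
  ext n
  rw [MonoidHom.mem_ker, mem_subgroupOf, ← inv_mem_iff, mem_stabilizer_iff]
  constructor
  · intro h
    have h1 := normalizerStabilizerToCentralizer_apply_smul G d n 1
    rwa [h, one_smul, one_mul, OneMemClass.coe_one, Perm.one_apply, eq_comm] at h1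
  · intro h
    refine Subtype.ext <| Equiv.ext <| congrFun <| funext_smul G d fun g => ?_
    rw [normalizerStabilizerToCentralizer_apply_smul, mul_smul, h]
    rfl

theorem normalizerStabilizerToCentralizer_surjective :
    Function.Surjective (normalizerStabilizerToCentralizer G d) := by
  rintro ⟨τ, hτ⟩
  rw [mem_centralizer_range_toPermHom_iff] at hτ
  obtain ⟨g, hg⟩ := exists_smul_eq G d (τ d)
  have hgN : g ∈ normalizer (stabilizer G d : Set G) := by
    rw [mem_normalizer_stabilizer_iff, hg, stabilizer_apply_eq_of_commute hτ]
  refine ⟨⟨g⁻¹, inv_mem hgN⟩, Subtype.ext <| Equiv.ext <| congrFun <| funext_smul G d fun k => ?_⟩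
  rw [normalizerStabilizerToCentralizer_apply_smul, inv_inv, mul_smul, hg, hτ]

noncomputable def centralizerEquivNormalizerQuotient :
    centralizer ((toPermHom G α).range : Set (Perm α)) ≃*
      normalizer (stabilizer G d : Set G) ⧸
        (stabilizer G d).subgroupOf (normalizer (stabilizer G d : Set G)) :=
  ((QuotientGroup.quotientMulEquivOfEq (ker_normalizerStabilizerToCentralizer G d).symm).trans
    (QuotientGroup.quotientKerEquivOfSurjective _
      (normalizerStabilizerToCentralizer_surjective G d))).symm

end MulAction

theorem stmt_2_general {Ω : Type} (G : Subgroup (Equiv.Perm Ω))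
    (htrans : ∀ a b : Ω, ∃ g ∈ G, g a = b) (d : Ω) :
    Nonempty ((Subgroup.centralizer (G : Set (Equiv.Perm Ω))) ≃*
      ((Subgroup.normalizer (((MulAction.stabilizer (Equiv.Perm Ω) d).subgroupOf G : Set G))) ⧸
        ((MulAction.stabilizer (Equiv.Perm Ω) d).subgroupOf G).subgroupOf
          (Subgroup.normalizer (((MulAction.stabilizer (Equiv.Perm Ω) d).subgroupOf G : Set G))))) := by
  have : IsPretransitive G Ω := ⟨fun a b => by
    obtain ⟨g, hg, hgab⟩ := htrans a b
    exact ⟨⟨g, hg⟩, hgab⟩⟩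
  have hrange : (toPermHom G Ω).range = G := by
    ext τ
    constructor
    · rintro ⟨g, rfl⟩
      exact g.2
    · exact fun hτ => ⟨⟨τ, hτ⟩, rfl⟩
  have hstab : stabilizer G d = (stabilizer (Perm Ω) d).subgroupOf G := rfl
  rw [← hstab]
  exact ⟨(MulEquiv.subgroupCongr (by rw [hrange])).trans (centralizerEquivNormalizerQuotient G d)⟩

/-- Lemma A1: if `G` is a transitive subgroup of the symmetric group of a finite set `Ω`
and `G_d` is the stabilizer in `G` of a point `d`, then the centralizer of `G` in `S_Ω`
is isomorphic to `N_G(G_d) / G_d`. -/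
theorem stmt_2 {Ω : Type} [Fintype Ω] (G : Subgroup (Equiv.Perm Ω))
    (htrans : ∀ a b : Ω, ∃ g ∈ G, g a = b) (d : Ω) :
    Nonempty ((Subgroup.centralizer (G : Set (Equiv.Perm Ω))) ≃*
      ((Subgroup.normalizer (((MulAction.stabilizer (Equiv.Perm Ω) d).subgroupOf G : Set G))) ⧸
        ((MulAction.stabilizer (Equiv.Perm Ω) d).subgroupOf G).subgroupOf
          (Subgroup.normalizer (((MulAction.stabilizer (Equiv.Perm Ω) d).subgroupOf G : Set G))))) :=
  stmt_2_general G htrans d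
end

section
/- Let q ≥ 3 be odd and let G = Z_2 * Z_q = ⟨S⟩ * ⟨R⟩ be the Hecke group. Then the power subgroup G² generated by all squares of elements of G is a normal subgroup of index 2, and G² is generated by the two elements R = ST^{-1} and A = T^{-1}S (each of order q); in particular G² ≅ Z_q * Z_q. -/
/-!
Sending `S` to the generator of `Z₂` and `R` to `1` gives a surjection `G → Z₂`, which kills
every square. Conversely `G ≅ (Z_q * Z_q) ⋊ Z₂`, where `Z₂` swaps the two factors, which sit
in `G` as `⟨R⟩` and `⟨SRS⟩`; hence the kernel of `G → Z₂` is the free product `⟨R⟩ * ⟨SRS⟩`.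
As `q` is odd, `R` and `SRS` are squares (of `R^((q+1)/2)` and its conjugate), so this
kernel is also contained in `G²`.
-/

/-- The Hecke group `G_q`, abstractly: the free product `Z_2 * Z_q`. -/
def Hecke (q : ℕ) : Type := Monoid.Coprod (Multiplicative (ZMod 2)) (Multiplicative (ZMod q))

instance (q : ℕ) : Group (Hecke q) :=
  inferInstanceAs (Group (Monoid.Coprod (Multiplicative (ZMod 2)) (Multiplicative (ZMod q))))

/-- The order-2 generator `S`. -/
def HS (q : ℕ) : Hecke q := Monoid.Coprod.inl (Multiplicative.ofAdd (1 : ZMod 2))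

/-- The order-`q` generator `R = S T⁻¹`.  Note `T = R⁻¹ S`, so `A = T⁻¹ S = S R S`. -/
def HR (q : ℕ) : Hecke q := Monoid.Coprod.inr (Multiplicative.ofAdd (1 : ZMod q))

open Monoid Multiplicative

section Group

variable {G : Type*} [Group G]

def zmodTwoHom (g : G) (hg : g ^ 2 = 1) : Multiplicative (ZMod 2) →* G :=
  AddMonoidHom.toMultiplicativeLeft
    (ZMod.lift 2 ⟨zmultiplesHom _ (Additive.ofMul g), by simp [← ofMul_zpow, hg]⟩)

lemma zmodTwoHom_ofAdd_one (g : G) (hg : g ^ 2 = 1) : zmodTwoHom g hg (ofAdd 1) = g := by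
  simp only [zmodTwoHom, AddMonoidHom.toMultiplicativeLeft_apply_apply, toAdd_ofAdd]
  rw [← Int.cast_one, ZMod.lift_coe]
  simp

theorem exists_eq_sq_of_odd_orderOf {x : G} (hx : Odd (orderOf x)) : ∃ y, x = y ^ 2 := by
  obtain ⟨m, hm⟩ := hx
  refine ⟨x ^ (m + 1), ?_⟩
  rw [← pow_mul, show (m + 1) * 2 = 2 * m + 1 + 1 by ring, ← hm, pow_succ, pow_orderOf_eq_one,
    one_mul]

theorem closure_squares_le_ker {H : Type*} [Group H] (hH : ∀ h : H, h ^ 2 = 1) (f : G →* H) :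
    Subgroup.closure {x : G | ∃ y, x = y ^ 2} ≤ f.ker := by
  rw [Subgroup.closure_le]
  rintro _ ⟨y, rfl⟩
  rw [SetLike.mem_coe, MonoidHom.mem_ker, map_pow, hH]

theorem MonoidHom.range_eq_zpowers_ofAdd_one {n : ℕ} (f : Multiplicative (ZMod n) →* G) :
    f.range = Subgroup.zpowers (f (ofAdd 1)) := by
  ext x
  constructor
  · rintro ⟨z, rfl⟩
    obtain ⟨k, hk⟩ := ZMod.intCast_surjective z.toAdd
    refine ⟨k, ?_⟩
    change f (ofAdd 1) ^ k = f z
    rw [← map_zpow, ← ofAdd_zsmul, zsmul_one, hk, ofAdd_toAdd]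
  · rintro ⟨k, rfl⟩
    exact ⟨_, map_zpow f _ k⟩

end Group

namespace Monoid.Coprod

variable (G : Type*) [Group G]

def swapAction : Multiplicative (ZMod 2) →* MulAut (G ∗ G) :=
  zmodTwoHom (MulEquiv.coprodComm G G) (MulEquiv.ext fun x ↦ swap_swap x)

@[simp]
lemma swapAction_ofAdd_one : swapAction G (ofAdd 1) = MulEquiv.coprodComm G G :=
  zmodTwoHom_ofAdd_one _ _

def liftInrConj : G ∗ G →* Multiplicative (ZMod 2) ∗ G :=
  lift inr ((MulAut.conj (inl (ofAdd 1))).toMonoidHom.comp inr)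

lemma conj_inl_ofAdd_one_conj (y : Multiplicative (ZMod 2) ∗ G) :
    MulAut.conj (inl (ofAdd 1)) (MulAut.conj (inl (ofAdd 1)) y) = y := by
  rw [← MulAut.mul_apply, ← map_mul, ← map_mul,
    show (ofAdd 1 * ofAdd 1 : Multiplicative (ZMod 2)) = 1 from rfl, map_one, map_one,
    MulAut.one_apply]

lemma liftInrConj_swapAction (z : Multiplicative (ZMod 2)) :
    (liftInrConj G).comp (swapAction G z).toMonoidHom
      = (MulAut.conj (inl z)).toMonoidHom.comp (liftInrConj G) := by
  obtain rfl | rfl : z = 1 ∨ z = ofAdd 1 := by decide +revert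
  · ext <;> simp
  · ext x <;> simp [liftInrConj, -MulAut.conj_apply, conj_inl_ofAdd_one_conj]

def semidirectEquiv :
    Multiplicative (ZMod 2) ∗ G ≃* (G ∗ G) ⋊[swapAction G] Multiplicative (ZMod 2) :=
  MonoidHom.toMulEquiv
    (lift SemidirectProduct.inr (SemidirectProduct.inl.comp inl))
    (SemidirectProduct.lift (liftInrConj G) inl (liftInrConj_swapAction G))
    (by ext <;> simp [liftInrConj])
    (SemidirectProduct.hom_ext
      (Coprod.hom_ext (MonoidHom.ext fun x ↦ by simp [liftInrConj])
        (MonoidHom.ext fun x ↦ by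
          simp [liftInrConj]
          rw [← map_inv, ← SemidirectProduct.inl_aut, swapAction_ofAdd_one]
          rfl))
      (MonoidHom.ext fun x ↦ by simp))

lemma liftInrConj_eq_semidirectEquiv_symm_comp_inl :
    liftInrConj G = (semidirectEquiv G).symm.toMonoidHom.comp SemidirectProduct.inl :=
  (SemidirectProduct.lift_comp_inl _ _ (liftInrConj_swapAction G)).symm

lemma rightHom_semidirectEquiv (x : Multiplicative (ZMod 2) ∗ G) :
    SemidirectProduct.rightHom (semidirectEquiv G x) = fst x := by
  have : SemidirectProduct.rightHom.comp (semidirectEquiv G).toMonoidHom = fst :=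
    hom_ext (by ext; simp [semidirectEquiv]) (by ext; simp [semidirectEquiv])
  exact DFunLike.congr_fun this x

theorem range_liftInrConj :
    (liftInrConj G).range = (fst : Multiplicative (ZMod 2) ∗ G →* _).ker := by
  ext x
  rw [liftInrConj_eq_semidirectEquiv_symm_comp_inl, MonoidHom.mem_range, MonoidHom.mem_ker,
    ← rightHom_semidirectEquiv, ← MonoidHom.mem_ker,
    ← SemidirectProduct.range_inl_eq_ker_rightHom, MonoidHom.mem_range]
  exact exists_congr fun _ ↦ (semidirectEquiv G).symm_apply_eq

theorem liftInrConj_injective : Function.Injective (liftInrConj G) := by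
  rw [liftInrConj_eq_semidirectEquiv_symm_comp_inl]
  exact (semidirectEquiv G).symm.injective.comp SemidirectProduct.inl_injective

end Monoid.Coprod

namespace Hecke

open Coprod Subgroup

variable (q : ℕ)

def liftRA : Multiplicative (ZMod q) ∗ Multiplicative (ZMod q) →* Hecke q :=
  liftInrConj (Multiplicative (ZMod q))

def parity : Hecke q →* Multiplicative (ZMod 2) := fst

lemma parity_surjective : Function.Surjective (parity q) := fst_surjective

lemma HS_mul_HS : HS q * HS q = 1 :=
  (map_mul inl (ofAdd (1 : ZMod 2)) (ofAdd 1)).symm.trans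
    (map_one (inl (N := Multiplicative (ZMod q))))

lemma HS_inv : (HS q)⁻¹ = HS q := inv_eq_of_mul_eq_one_right (HS_mul_HS q)

lemma orderOf_HR : orderOf (HR q) = q :=
  (orderOf_injective _ inr_injective (ofAdd (1 : ZMod q))).trans
    ((orderOf_ofAdd_eq_addOrderOf _).trans (ZMod.addOrderOf_one q))

lemma orderOf_HS_mul_HR_mul_HS : orderOf (HS q * HR q * HS q) = q := by
  have : SemiconjBy (HS q) (HR q) (HS q * HR q * HS q) := by
    rw [SemiconjBy, mul_assoc _ (HS q), HS_mul_HS, mul_one]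
  exact this.orderOf_eq.symm.trans (orderOf_HR q)

theorem range_liftRA : (liftRA q).range = closure {HR q, HS q * HR q * HS q} := by
  rw [Set.insert_eq, Subgroup.closure_union, ← zpowers_eq_closure, ← zpowers_eq_closure,
    ← HS_inv]
  exact (range_lift _ _).trans (congr_arg₂ (· ⊔ ·) (MonoidHom.range_eq_zpowers_ofAdd_one _)
    (MonoidHom.range_eq_zpowers_ofAdd_one _))

theorem range_liftRA_eq_ker_parity : (liftRA q).range = (parity q).ker :=
  range_liftInrConj _

theorem liftRA_injective : Function.Injective (liftRA q) :=
  liftInrConj_injective _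

end Hecke

theorem stmt_6_general (q : ℕ) (hodd : Odd q) :
    (Subgroup.closure {x : Hecke q | ∃ y, x = y ^ 2}).Normal ∧
    (Subgroup.closure {x : Hecke q | ∃ y, x = y ^ 2}).index = 2 ∧
    Subgroup.closure {x : Hecke q | ∃ y, x = y ^ 2}
      = Subgroup.closure {HR q, HS q * HR q * HS q} ∧
    orderOf (HR q) = q ∧ orderOf (HS q * HR q * HS q) = q ∧
    Nonempty ((Subgroup.closure {x : Hecke q | ∃ y, x = y ^ 2}) ≃*
      Monoid.Coprod (Multiplicative (ZMod q)) (Multiplicative (ZMod q))) := by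
  have hsq : Subgroup.closure {x : Hecke q | ∃ y, x = y ^ 2} ≤ (Hecke.parity q).ker :=
    closure_squares_le_ker (by decide) (Hecke.parity q)
  have hgen : Subgroup.closure {HR q, HS q * HR q * HS q}
      ≤ Subgroup.closure {x | ∃ y, x = y ^ 2} := by
    rw [Subgroup.closure_le, Set.insert_subset_iff, Set.singleton_subset_iff]
    constructor <;> refine Subgroup.subset_closure (exists_eq_sq_of_odd_orderOf ?_)
    · rwa [Hecke.orderOf_HR]
    · rwa [Hecke.orderOf_HS_mul_HR_mul_HS]
  have hrange : Subgroup.closure {x : Hecke q | ∃ y, x = y ^ 2} = (Hecke.liftRA q).range :=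
    le_antisymm (Hecke.range_liftRA_eq_ker_parity q ▸ hsq) (Hecke.range_liftRA q ▸ hgen)
  have hker : Subgroup.closure {x : Hecke q | ∃ y, x = y ^ 2} = (Hecke.parity q).ker :=
    hrange.trans (Hecke.range_liftRA_eq_ker_parity q)
  refine ⟨hker ▸ (Hecke.parity q).normal_ker, ?_, hrange.trans (Hecke.range_liftRA q),
    Hecke.orderOf_HR q, Hecke.orderOf_HS_mul_HR_mul_HS q,
    ⟨(MulEquiv.subgroupCongr hrange).trans
      (MonoidHom.ofInjective (Hecke.liftRA_injective q)).symm⟩⟩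
  rw [hker, Subgroup.index_ker, MonoidHom.range_eq_top_of_surjective _ (Hecke.parity_surjective q),
    Subgroup.card_top, Nat.card_congr Multiplicative.toAdd, Nat.card_zmod]

/-- Proposition 5.5 (odd case): for odd `q ≥ 3`, the power subgroup `G²` of `G_q`
generated by all squares is normal of index 2, is generated by `R = ST⁻¹` and
`A = T⁻¹S = SRS` (each of order `q`), and is isomorphic to `Z_q * Z_q`. -/
theorem stmt_6 (q : ℕ) (hq : 3 ≤ q) (hodd : Odd q) :
    (Subgroup.closure {x : Hecke q | ∃ y, x = y ^ 2}).Normal ∧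
    (Subgroup.closure {x : Hecke q | ∃ y, x = y ^ 2}).index = 2 ∧
    Subgroup.closure {x : Hecke q | ∃ y, x = y ^ 2}
      = Subgroup.closure {HR q, HS q * HR q * HS q} ∧
    orderOf (HR q) = q ∧ orderOf (HS q * HR q * HS q) = q ∧
    Nonempty ((Subgroup.closure {x : Hecke q | ∃ y, x = y ^ 2}) ≃*
      Monoid.Coprod (Multiplicative (ZMod q)) (Multiplicative (ZMod q))) :=
  stmt_6_general q hodd
end

section
/- Let q ≥ 3, let G = Z_2 * Z_q = ⟨S⟩ * ⟨R⟩ with S of order 2 and R of order q, and let r > 1 be an odd divisor of q. Then the power subgroup G^r generated by all r-th powers has index exactly r in G, and G/G^r is cyclic of order r. -/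
open Monoid.Coprod Subgroup

section PowerSubgroup

variable {G H : Type*} [Group G] [Group H]

variable (G) in
def powerSubgroup (n : ℕ) : Subgroup G :=
  closure {x : G | ∃ y, x = y ^ n}

theorem pow_mem_powerSubgroup (n : ℕ) (y : G) : y ^ n ∈ powerSubgroup G n :=
  subset_closure ⟨y, rfl⟩

instance powerSubgroup_characteristic (n : ℕ) : (powerSubgroup G n).Characteristic :=
  characteristic_iff_map_le.mpr fun ϕ => by
    rw [powerSubgroup, MonoidHom.map_closure, closure_le]
    rintro _ ⟨_, ⟨y, rfl⟩, rfl⟩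
    exact (map_pow ϕ.toMonoidHom y n).symm ▸ pow_mem_powerSubgroup n (ϕ y)

theorem powerSubgroup_le_ker {n : ℕ} {φ : G →* H} (h : ∀ x : H, x ^ n = 1) :
    powerSubgroup G n ≤ φ.ker :=
  closure_le _ |>.mpr <| by
    rintro _ ⟨y, rfl⟩
    exact φ.mem_ker.mpr <| (map_pow φ y n).trans (h _)

end PowerSubgroup

theorem Subgroup.eq_of_le_of_index_le {G : Type*} [Group G] {H K : Subgroup G} (hle : H ≤ K)
    [H.FiniteIndex] (hidx : H.index ≤ K.index) : H = K :=
  hle.eq_of_not_lt fun hlt => (index_strictAnti hlt).not_ge hidx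

theorem Multiplicative.zmod_pow_eq_one {n : ℕ} (x : Multiplicative (ZMod n)) : x ^ n = 1 :=
  toAdd_eq_zero.mp <| by rw [toAdd_pow, nsmul_eq_mul, ZMod.natCast_self, zero_mul]

theorem Multiplicative.zmod_two_pow_of_odd {r : ℕ} (hr : Odd r) (m : Multiplicative (ZMod 2)) :
    m ^ r = m := by
  obtain ⟨k, rfl⟩ := hr
  rw [pow_succ, pow_mul, zmod_pow_eq_one, one_pow, one_mul]

theorem Multiplicative.zmod_mem_zpowers_ofAdd_one {q : ℕ} (x : Multiplicative (ZMod q)) :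
    x ∈ zpowers (Multiplicative.ofAdd 1) := by
  obtain ⟨k, hk⟩ := ZMod.intCast_surjective x.toAdd
  exact ⟨k, by simp [← ofAdd_zsmul, hk]⟩

theorem Monoid.Coprod.mk_mem_zpowers_of_range_inl_le {M C : Type*} [Group M] [Group C]
    {N : Subgroup (M ∗ C)} [N.Normal] (hM : (inl : M →* M ∗ C).range ≤ N) {c : C}
    (hc : ∀ x, x ∈ zpowers c) (g : M ∗ C) :
    (g : (M ∗ C) ⧸ N) ∈ zpowers ((inr c : M ∗ C) : (M ∗ C) ⧸ N) := by
  induction g using Monoid.Coprod.induction_on with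
  | inl m =>
    rw [(QuotientGroup.eq_one_iff _).mpr (hM ⟨m, rfl⟩)]
    exact one_mem _
  | inr x =>
    obtain ⟨k, rfl⟩ := hc x
    rw [map_zpow, QuotientGroup.mk_zpow]
    exact zpow_mem (mem_zpowers _) k
  | mul a b ha hb =>
    rw [QuotientGroup.mk_mul]
    exact mul_mem ha hb

theorem Subgroup.index_dvd_of_forall_mem_zpowers {G : Type*} [Group G] {N : Subgroup G} [N.Normal]
    {g : G} {n : ℕ} (hgen : ∀ x : G ⧸ N, x ∈ zpowers (g : G ⧸ N)) (hg : g ^ n ∈ N) :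
    N.index ∣ n := by
  rw [index_eq_card, ← orderOf_eq_card_of_forall_mem_zpowers hgen]
  exact orderOf_dvd_of_pow_eq_one <| by rwa [← QuotientGroup.mk_pow, QuotientGroup.eq_one_iff]

namespace Monoid.Coprod

variable (M : Type*) [Group M] {q r : ℕ}

def castHomRight (hr : r ∣ q) : M ∗ Multiplicative (ZMod q) →* Multiplicative (ZMod r) :=
  lift 1 (ZMod.castHom hr (ZMod r)).toAddMonoidHom.toMultiplicative

variable {M}

theorem castHomRight_surjective (hr : r ∣ q) : Function.Surjective (castHomRight M hr) := fun x =>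
  let ⟨y, hy⟩ := ZMod.castHom_surjective hr x.toAdd
  ⟨inr (Multiplicative.ofAdd y), by simp [castHomRight, hy]⟩

theorem index_ker_castHomRight (hr : r ∣ q) : (castHomRight M hr).ker.index = r := by
  rw [index_ker, MonoidHom.range_eq_top_of_surjective _ (castHomRight_surjective hr), card_top]
  exact (Nat.card_congr Multiplicative.toAdd).trans (Nat.card_zmod r)

theorem index_powerSubgroup_dvd (hM : ∀ m : M, ∃ y, m = y ^ r) :
    (powerSubgroup (M ∗ Multiplicative (ZMod q)) r).index ∣ r := by
  have hinl : (inl : M →* M ∗ Multiplicative (ZMod q)).range ≤ powerSubgroup _ r := by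
    rintro _ ⟨m, rfl⟩
    obtain ⟨y, rfl⟩ := hM m
    rw [map_pow]
    exact pow_mem_powerSubgroup r _
  refine index_dvd_of_forall_mem_zpowers (g := inr (Multiplicative.ofAdd 1)) (fun x => ?_)
    (pow_mem_powerSubgroup r _)
  obtain ⟨g, rfl⟩ := QuotientGroup.mk_surjective x
  exact mk_mem_zpowers_of_range_inl_le hinl Multiplicative.zmod_mem_zpowers_ofAdd_one g

theorem ker_castHomRight (hr : r ∣ q) (hr0 : r ≠ 0) (hM : ∀ m : M, ∃ y, m = y ^ r) :
    (castHomRight M hr).ker = powerSubgroup (M ∗ Multiplicative (ZMod q)) r := by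
  have hdvd := index_powerSubgroup_dvd (q := q) hM
  have : (powerSubgroup (M ∗ Multiplicative (ZMod q)) r).FiniteIndex :=
    ⟨ne_zero_of_dvd_ne_zero hr0 hdvd⟩
  refine (eq_of_le_of_index_le (powerSubgroup_le_ker Multiplicative.zmod_pow_eq_one) ?_).symm
  rw [index_ker_castHomRight]
  exact Nat.le_of_dvd (Nat.pos_of_ne_zero hr0) hdvd

end Monoid.Coprod

theorem stmt_7_general (q r : ℕ) (hr : r ∣ q) (hrodd : Odd r) :
    (Subgroup.closure {x : Hecke q | ∃ y, x = y ^ r}).index = r ∧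
    ∃ φ : Hecke q →* Multiplicative (ZMod r), Function.Surjective φ ∧
      φ.ker = Subgroup.closure {x : Hecke q | ∃ y, x = y ^ r} := by
  have hker := ker_castHomRight hr hrodd.pos.ne' fun m =>
    ⟨m, (Multiplicative.zmod_two_pow_of_odd hrodd m).symm⟩
  exact ⟨(congrArg Subgroup.index hker).symm.trans (index_ker_castHomRight hr),
    castHomRight _ hr, castHomRight_surjective hr, hker⟩

/-- Proposition 5.6: for an odd divisor `r > 1` of `q`, the power subgroup `G^r` of
`G_q = Z_2 * Z_q` has index exactly `r`, and the quotient is cyclic of order `r`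
(expressed via a surjection onto `Z_r` with kernel `G^r`). -/
theorem stmt_7 (q r : ℕ) (hq : 3 ≤ q) (hr : r ∣ q) (hr1 : 1 < r) (hrodd : Odd r) :
    (Subgroup.closure {x : Hecke q | ∃ y, x = y ^ r}).index = r ∧
    ∃ φ : Hecke q →* Multiplicative (ZMod r), Function.Surjective φ ∧
      φ.ker = Subgroup.closure {x : Hecke q | ∃ y, x = y ^ r} :=
  stmt_7_general q r hr hrodd
end

section
/- Let q ≥ 3 be odd and suppose integers g ≥ 0, τ_2 ≥ 0, v_{r_i} ≥ 0 (for each divisor r_i of q with 2 ≤ r_i ≤ q), d ≥ 1, v_∞ ≥ 1 satisfy 2g − 2 + τ_2/2 + Σ_i v_{r_i}(1 − 1/r_i) + v_∞ = d(1/2 − 1/q). Then m_0 = 4g − 4 + τ_2 + 2v_∞ + Σ_i v_{r_i}(2 − q/r_i) is an integer multiple of q − 2. -/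
/-- Final assertion of Theorem 6.2: for odd `q`, the Riemann–Hurwitz identity
`2g - 2 + τ2/2 + Σ v_r (1 - 1/r) + vinf = d (1/2 - 1/q)` forces
`q - 2` to divide `m0 = 4g - 4 + τ2 + 2vinf + Σ v_r (2 - q/r)`. -/
theorem stmt_16 (q : ℕ) (hq : 3 ≤ q) (hodd : Odd q)
    (g τ2 d vinf : ℕ) (hd : 1 ≤ d) (hvinf : 1 ≤ vinf) (v : ℕ → ℕ)
    (hv : ∀ r, v r ≠ 0 → r ∣ q ∧ 2 ≤ r)
    (hRH : (2 * g : ℚ) - 2 + τ2 / 2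
        + ∑ r ∈ q.divisors.filter (fun r => 2 ≤ r), (v r : ℚ) * (1 - 1 / r)
        + vinf = d * (1 / 2 - 1 / q)) :
    ((q : ℤ) - 2) ∣ (4 * g - 4 + τ2 + 2 * vinf
        + ∑ r ∈ q.divisors.filter (fun r => 2 ≤ r), (v r : ℤ) * (2 - ((q / r : ℕ) : ℤ))) := by
  set F := q.divisors.filter (fun r => 2 ≤ r) with hF
  have hq0 : (q:ℚ) ≠ 0 := by positivity
  -- cast facts for divisors
  have hcast : ∀ r ∈ F, ((q / r : ℕ) : ℚ) = (q:ℚ) / r ∧ (r:ℚ) ≠ 0 := by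
    intro r hr
    simp only [hF, Finset.mem_filter, Nat.mem_divisors] at hr
    have hr0 : r ≠ 0 := by omega
    exact ⟨Nat.cast_div hr.1.1 (by exact_mod_cast hr0), by exact_mod_cast hr0⟩
  have hS : (q:ℚ) * ∑ r ∈ F, (v r : ℚ) * (2 - ((q/r:ℕ):ℚ))
      = 2*q * ∑ r ∈ F, (v r : ℚ) * (1 - 1/(r:ℚ))
        + (2 - q) * ∑ r ∈ F, (v r:ℚ) * ((q/r:ℕ):ℚ) := by
    rw [Finset.mul_sum, Finset.mul_sum, Finset.mul_sum, ← Finset.sum_add_distrib]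
    refine Finset.sum_congr rfl fun r hr => ?_
    obtain ⟨h1, h2⟩ := hcast r hr
    rw [h1]
    field_simp
    ring
  -- the key integer identity
  have key : (q:ℤ) * (4 * g - 4 + τ2 + 2 * vinf
        + ∑ r ∈ F, (v r : ℤ) * (2 - ((q / r : ℕ) : ℤ)))
      = ((q:ℤ) - 2) * (d - ∑ r ∈ F, (v r : ℤ) * ((q / r : ℕ) : ℤ)) := by
    have hQ : (q:ℚ) * (4 * g - 4 + τ2 + 2 * vinf
        + ∑ r ∈ F, (v r : ℚ) * (2 - ((q / r : ℕ) : ℚ)))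
      = ((q:ℚ) - 2) * (d - ∑ r ∈ F, (v r : ℚ) * ((q / r : ℕ) : ℚ)) := by
      linear_combination (2*(q:ℚ)) * hRH + hS - 2*(d:ℚ)*(mul_inv_cancel₀ hq0)
    exact_mod_cast hQ
  -- coprimality of q - 2 and q
  have h2q : IsCoprime (2:ℤ) (q:ℤ) :=
    Nat.isCoprime_iff_coprime.mpr (Nat.coprime_two_left.mpr hodd)
  have hcop : IsCoprime ((q:ℤ) - 2) (q:ℤ) := by
    have := (h2q.neg_left).add_mul_left_left (1:ℤ)
    simpa [sub_eq_neg_add] using this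
  exact hcop.dvd_of_dvd_mul_left ⟨_, key⟩
end

section
/- Let q ≥ 3 be prime and consider the Hecke group G_q. The principal congruence subgroup of level 2, G(2) (kernel of reduction of matrix entries mod 2 in PSL(2, Z[λ_q])), has index 2q in G_q, and G_0(2) = {(x_ij) ∈ G_q : x_{12} ≡ 0 mod 2} has index q in G_q. -/
open Real

/-- The generator `S = [[0,1],[-1,0]]` as an element of `SL(2,ℝ)`. -/
noncomputable def Smat : Matrix.SpecialLinearGroup (Fin 2) ℝ :=
  ⟨!![0, 1; -1, 0], by norm_num [Matrix.det_fin_two_of]⟩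

/-- The generator `T = [[1,λ_q],[0,1]]` as an element of `SL(2,ℝ)`. -/
noncomputable def Tmat (q : ℕ) : Matrix.SpecialLinearGroup (Fin 2) ℝ :=
  ⟨!![1, 2 * Real.cos (π / q); 0, 1], by norm_num [Matrix.det_fin_two_of]⟩

/-- The Hecke group `G_q` realised inside `SL(2,ℝ)` (it contains `-I = S²`, so indices of
congruence subgroups agree with those in `PSL(2,ℝ)`). -/
noncomputable def HeckeSL (q : ℕ) : Subgroup (Matrix.SpecialLinearGroup (Fin 2) ℝ) :=
  Subgroup.closure {Smat, Tmat q}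

/-- The set `2·ℤ[λ_q]` of elements of `ℤ[λ_q] ⊆ ℝ` divisible by 2. -/
def twoLambda (q : ℕ) : Set ℝ :=
  {y : ℝ | ∃ z ∈ Subring.closure ({2 * Real.cos (π / q)} : Set ℝ), y = 2 * z}

/-!
Reduction of matrix entries modulo `2 ℤ[λ_q]` is a homomorphism `φ` from `G_q` to
`SL(2, ℤ[λ_q]/2)` with kernel `G(2)`, and `G₀(2)` is the preimage of the subgroup `B` of matrices
with vanishing upper-right entry. Since `-I ≡ I` and `T² ≡ I`, the images `s = φ S`, `t = φ T` are
involutions, while `(ST)^q = I` (the matrix `-ST` has trace `2 cos (π/q)`) and `st ∉ B` (because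
`1/2` is not an algebraic integer) show that `st` has order `q`. A group generated by two
involutions whose product has odd prime order `q` is dihedral of order `2q`, which gives
`[G_q : G(2)] = |im φ| = 2q`. In it, `B` meets `⟨st⟩` trivially but contains the involution `sts`,
so `[im φ : B ∩ im φ] = q`.
-/

namespace Subgroup

variable {G : Type*} [Group G] {s t : G}

lemma conj_mem_zpowers_mul_of_involutions (hs : s * s = 1) (ht : t * t = 1) {x : G}
    (hx : x ∈ zpowers (s * t)) : s * x * s ∈ zpowers (s * t) := by
  obtain ⟨n, rfl⟩ := mem_zpowers_iff.mp hx
  have hs' : s⁻¹ = s := inv_eq_of_mul_eq_one_right hs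
  have ht' : t⁻¹ = t := inv_eq_of_mul_eq_one_right ht
  have hinv : s * (s * t) * s⁻¹ = (s * t)⁻¹ := by
    rw [mul_inv_rev, ← mul_assoc, hs, one_mul, ht']
  have : s * (s * t) ^ n * s = (s * (s * t) * s⁻¹) ^ n := by rw [conj_zpow, hs']
  rw [this, hinv]
  exact zpow_mem (inv_mem (mem_zpowers _)) n

lemma mem_zpowers_or_mul_mem_of_mem_closure_pair (hs : s * s = 1) (ht : t * t = 1) {b : G}
    (hb : b ∈ closure {s, t}) : b ∈ zpowers (s * t) ∨ b * s ∈ zpowers (s * t) := by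
  have hss (z : G) : s * (s * z) = z := by rw [← mul_assoc, hs, one_mul]
  have conj (x : G) := conj_mem_zpowers_mul_of_involutions hs ht (x := x)
  induction hb using closure_induction with
  | mem x hx =>
    rcases hx with rfl | rfl
    · exact .inr (hs ▸ one_mem _)
    · have : x * s = (s * x)⁻¹ := by
        rw [mul_inv_rev, inv_eq_of_mul_eq_one_right hs, inv_eq_of_mul_eq_one_right ht]
      exact .inr (this ▸ inv_mem (mem_zpowers _))
  | one => exact .inl (one_mem _)
  | mul x y _ _ hx hy =>
    rcases hx with hx | hx <;> rcases hy with hy | hy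
    · exact .inl (mul_mem hx hy)
    · exact .inr (mul_assoc x y s ▸ mul_mem hx hy)
    · have : x * y * s = x * s * (s * y * s) := by simp only [mul_assoc, hss]
      exact .inr (this ▸ mul_mem hx (conj y hy))
    · have : x * y = x * s * (s * (y * s) * s) := by simp only [mul_assoc, hss, hs, mul_one]
      exact .inl (this ▸ mul_mem hx (conj _ hy))
  | inv x _ hx =>
    rcases hx with hx | hx
    · exact .inl (inv_mem hx)
    · have : x⁻¹ * s = s * (x * s)⁻¹ * s := by
        simp only [mul_inv_rev, inv_eq_of_mul_eq_one_right hs, hss]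
      exact .inr (this ▸ conj _ (inv_mem hx))

lemma relIndex_zpowers_mul_closure_pair (hs : s * s = 1) (ht : t * t = 1)
    (hsC : s ∉ zpowers (s * t)) : (zpowers (s * t)).relIndex (closure {s, t}) = 2 :=
  relIndex_eq_two_iff_exists_notMem_and.mpr ⟨s, subset_closure (Set.mem_insert _ _), hsC,
    fun _ hb => (mem_zpowers_or_mul_mem_of_mem_closure_pair hs ht hb).symm⟩

lemma zpowers_mul_le_closure_pair : zpowers (s * t) ≤ closure {s, t} :=
  zpowers_le.mpr (mul_mem (subset_closure (Set.mem_insert _ _))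
    (subset_closure (Set.mem_insert_of_mem _ rfl)))

lemma card_mul_relIndex {H K : Subgroup G} (h : H ≤ K) :
    Nat.card H * H.relIndex K = Nat.card K := by
  rw [← relIndex_bot_left, ← relIndex_bot_left]
  exact relIndex_mul_relIndex _ _ _ bot_le h

lemma card_closure_pair_of_involutions (hs : s * s = 1) (ht : t * t = 1)
    (hsC : s ∉ zpowers (s * t)) : Nat.card (closure {s, t}) = 2 * orderOf (s * t) := by
  rw [← card_mul_relIndex zpowers_mul_le_closure_pair, Nat.card_zpowers,
    relIndex_zpowers_mul_closure_pair hs ht hsC, mul_comm]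

lemma notMem_zpowers_of_odd_orderOf {c : G} (hs : s * s = 1) (hs1 : s ≠ 1) (hc : Odd (orderOf c)) :
    s ∉ zpowers c := by
  intro h
  have h2 : orderOf s = 2 := orderOf_eq_prime (by rw [sq, hs]) hs1
  have := orderOf_dvd_of_mem_zpowers h
  rw [h2] at this
  exact (Nat.not_even_iff_odd.mpr hc) (even_iff_two_dvd.mpr this)

lemma relIndex_zpowers_of_prime {B : Subgroup G} {c : G} (hp : (orderOf c).Prime)
    (hc : c ∉ B) : B.relIndex (zpowers c) = orderOf c := by
  have hdvd := relIndex_dvd_card (H := B) (K := zpowers c)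
  rw [Nat.card_zpowers] at hdvd
  exact (hp.eq_one_or_self_of_dvd _ hdvd).resolve_left fun h =>
    hc (relIndex_eq_one.mp h (mem_zpowers c))

/-- `B` meets `⟨st⟩` (of prime order `p`) trivially, so the index is at least `p`; it contains the
involution `sts`, so `|B ∩ ⟨s, t⟩| ≥ 2` and the index is at most `|⟨s, t⟩| / 2 = p`. -/
lemma relIndex_closure_pair_eq_orderOf_mul {B : Subgroup G} (hs : s * s = 1) (ht : t * t = 1)
    (hsC : s ∉ zpowers (s * t)) (hp : (orderOf (s * t)).Prime) (hstB : s * t ∉ B)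
    (hstsB : s * t * s ∈ B) : B.relIndex (closure {s, t}) = orderOf (s * t) := by
  set D := closure {s, t}
  have hD : Nat.card D = 2 * orderOf (s * t) := card_closure_pair_of_involutions hs ht hsC
  have : Finite D := Nat.finite_of_card_ne_zero (by simp [hD, hp.ne_zero])
  have hge : orderOf (s * t) ≤ B.relIndex D :=
    relIndex_zpowers_of_prime hp hstB ▸ relIndex_le_of_le_right zpowers_mul_le_closure_pair
      (B.subgroupOf D).index_ne_zero_of_finite
  have hsts : s * t * s ≠ 1 := fun h => hsC <| by
    rw [mul_eq_one_iff_eq_inv.mp h]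
    simp
  have hstsD : s * t * s ∈ D :=
    mul_mem (zpowers_mul_le_closure_pair (mem_zpowers _)) (subset_closure (Set.mem_insert _ _))
  have hBD : 1 < Nat.card (B.subgroupOf D) := by
    refine (one_lt_card_iff_ne_bot _).mpr (ne_bot_iff_exists_ne_one.mpr ⟨⟨⟨_, hstsD⟩, hstsB⟩, ?_⟩)
    simpa [Subtype.ext_iff] using hsts
  have hle : B.relIndex D * 2 ≤ 2 * orderOf (s * t) := by
    rw [← hD, ← card_mul_index (B.subgroupOf D), mul_comm]
    exact Nat.mul_le_mul_right _ hBD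
  omega

end Subgroup

namespace Matrix

lemma mul_self_fin_two {A : Type*} [CommRing A] (M : Matrix (Fin 2) (Fin 2) A) :
    M * M = M.trace • M - M.det • 1 := by
  ext i j
  fin_cases i <;> fin_cases j <;>
    simp [mul_apply, Fin.sum_univ_two, trace_fin_two, det_fin_two] <;> ring

lemma sin_smul_pow_succ {M : Matrix (Fin 2) (Fin 2) ℝ} (hdet : M.det = 1) {θ : ℝ}
    (htr : M.trace = 2 * cos θ) (n : ℕ) :
    sin θ • M ^ (n + 1) = sin ((n + 1) * θ) • M - sin (n * θ) • 1 := by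
  induction n with
  | zero => simp
  | succ n ih =>
    have hsin : sin ((n + 1 + 1) * θ) = 2 * cos θ * sin ((n + 1) * θ) - sin (n * θ) := by
      have h1 : (n + 1 + 1) * θ = (n + 1) * θ + θ := by ring
      have h2 : (n : ℝ) * θ = (n + 1) * θ - θ := by ring
      rw [h1, h2, sin_add, sin_sub]; ring
    rw [pow_succ, ← smul_mul_assoc, ih, sub_mul, smul_mul_assoc, mul_self_fin_two, hdet, htr]
    push_cast
    rw [hsin, smul_mul_assoc, one_mul]
    module

lemma pow_eq_neg_one_of_trace_eq_two_mul_cos {M : Matrix (Fin 2) (Fin 2) ℝ} (hdet : M.det = 1)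
    {q : ℕ} (hq : 2 ≤ q) (htr : M.trace = 2 * cos (π / q)) : M ^ q = -1 := by
  have hsin : sin (π / q) ≠ 0 := by
    refine (sin_pos_of_pos_of_lt_pi (by positivity) ?_).ne'
    exact div_lt_self pi_pos (by exact_mod_cast hq)
  obtain ⟨n, rfl⟩ := Nat.exists_eq_add_of_le' (by omega : 1 ≤ q)
  have h := sin_smul_pow_succ hdet htr n
  have hq0 : ((n + 1 : ℕ) : ℝ) ≠ 0 := by positivity
  have h1 : ((n : ℝ) + 1) * (π / ↑(n + 1)) = π := by push_cast at hq0 ⊢; field_simp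
  have h2 : (n : ℝ) * (π / ↑(n + 1)) = π - π / ↑(n + 1) := by push_cast at hq0 ⊢; field_simp; ring
  rw [h1, h2, sin_pi, sin_pi_sub, zero_smul, zero_sub, ← neg_smul, neg_smul, ← smul_neg] at h
  exact smul_right_injective _ hsin h

end Matrix

namespace Matrix.SpecialLinearGroup

variable {n : Type*} [Fintype n] [DecidableEq n] {A : Type*} [CommRing A]

lemma map_subtype_injective (R : Subring A) :
    Function.Injective (map R.subtype : SpecialLinearGroup n R →* SpecialLinearGroup n A) :=
  fun _ _ h => ext _ _ fun i j => Subtype.ext (congrArg (fun g : SpecialLinearGroup n A => g i j) h)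

lemma mem_range_map_subtype_iff (R : Subring A) {g : SpecialLinearGroup n A} :
    g ∈ (map R.subtype).range ↔ ∀ i j, g i j ∈ R := by
  constructor
  · rintro ⟨g, rfl⟩ i j
    exact (g i j).2
  · intro h
    let M : Matrix n n R := Matrix.of fun i j => ⟨g i j, h i j⟩
    have hdet : M.det = 1 := Subtype.ext <| by
      rw [Subring.coe_one, ← R.coe_subtype, RingHom.map_det]
      exact g.2
    exact ⟨⟨M, hdet⟩, ext _ _ fun _ _ => rfl⟩

lemma map_mk_eq_one_iff (I : Ideal A) (g : SpecialLinearGroup n A) :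
    map (Ideal.Quotient.mk I) g = 1 ↔ ∀ i j, g i j - (1 : Matrix n n A) i j ∈ I := by
  rw [ext_iff]
  refine forall₂_congr fun i j => ?_
  rw [← Ideal.Quotient.eq, coe_one, Matrix.one_apply, Matrix.one_apply]
  split_ifs <;> simp

variable (A) in
def lowerTriangular : Subgroup (SpecialLinearGroup (Fin 2) A) where
  carrier := {g | g 0 1 = 0}
  one_mem' := by simp
  mul_mem' {a b} ha hb := by
    change (a * b) 0 1 = 0
    rw [coe_mul, mul_apply, Fin.sum_univ_two, ha, hb, zero_mul, mul_zero, add_zero]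
  inv_mem' {a} ha := by
    change a⁻¹ 0 1 = 0
    simpa [coe_inv, adjugate_fin_two] using ha

end Matrix.SpecialLinearGroup

namespace Hecke

open Matrix.SpecialLinearGroup
open scoped MatrixGroups

variable (q : ℕ)

def heckeRing : Subring ℝ := Subring.closure {2 * cos (π / q)}

lemma two_mul_cos_mem_heckeRing : 2 * cos (π / q) ∈ heckeRing q := Subring.subset_closure rfl

lemma isIntegral_of_mem_heckeRing {x : ℝ} (hx : x ∈ heckeRing q) : IsIntegral ℤ x := by
  refine Subring.closure_le (t := (integralClosure ℤ ℝ).toSubring).mpr ?_ hx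
  rw [Set.singleton_subset_iff]
  simpa [div_eq_inv_mul, mem_integralClosure_iff] using isIntegral_two_mul_cos_rat_mul_pi (q⁻¹ : ℚ)

lemma one_notMem_twoLambda : (1 : ℝ) ∉ twoLambda q := by
  rintro ⟨z, hzR, h⟩
  have hz : z = algebraMap ℚ ℝ (1 / 2) := by simp; linarith
  have hint := isIntegral_of_mem_heckeRing q (hz ▸ hzR)
  obtain ⟨y, hy⟩ := IsIntegrallyClosed.isIntegral_iff.mp
    ((isIntegral_algebraMap_iff (algebraMap ℚ ℝ).injective).mp hint)
  have : (2 * y : ℚ) = 1 := by rw [show (y : ℚ) = 1 / 2 from hy]; norm_num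
  have : 2 * y = 1 := by exact_mod_cast this
  omega

@[simp]
lemma zero_mem_twoLambda : (0 : ℝ) ∈ twoLambda q := ⟨0, zero_mem _, by simp⟩

lemma heckeSL_le_range_map : HeckeSL q ≤ (map (heckeRing q).subtype).range := by
  rw [HeckeSL, Subgroup.closure_le]
  rintro g (rfl | rfl) <;> refine (mem_range_map_subtype_iff _).mpr fun i j => ?_ <;>
    fin_cases i <;> fin_cases j <;> simp [Smat, Tmat, two_mul_cos_mem_heckeRing, one_mem]

noncomputable def heckeLift : HeckeSL q →* SL(2, heckeRing q) :=
  (MonoidHom.ofInjective (map_subtype_injective (n := Fin 2) (heckeRing q))).symm.toMonoidHom.comp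
    (Subgroup.inclusion (heckeSL_le_range_map q))

lemma coe_heckeLift_apply (g : HeckeSL q) (i j : Fin 2) :
    (heckeLift q g i j : ℝ) = ((g : SL(2, ℝ)) : Matrix (Fin 2) (Fin 2) ℝ) i j :=
  congrArg (fun g : SL(2, ℝ) => g i j) <| MonoidHom.apply_ofInjective_symm
    (map_subtype_injective (n := Fin 2) (heckeRing q))
    (Subgroup.inclusion (heckeSL_le_range_map q) g)

abbrev heckeRingModTwo : Type := heckeRing q ⧸ Ideal.span {(2 : heckeRing q)}

noncomputable def reductionModTwo : HeckeSL q →* SL(2, heckeRingModTwo q) :=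
  (map (Ideal.Quotient.mk _)).comp (heckeLift q)

lemma mem_span_two_iff (x : heckeRing q) :
    x ∈ Ideal.span {(2 : heckeRing q)} ↔ (x : ℝ) ∈ twoLambda q := by
  have h2 : ((2 : heckeRing q) : ℝ) = 2 := rfl
  rw [Ideal.mem_span_singleton']
  constructor
  · rintro ⟨z, rfl⟩
    exact ⟨z, z.2, by simp [h2, mul_comm]⟩
  · rintro ⟨z, hz, h⟩
    exact ⟨⟨z, hz⟩, Subtype.ext (by simp [h2, h, mul_comm])⟩

lemma reductionModTwo_eq_one_iff (g : HeckeSL q) :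
    reductionModTwo q g = 1 ↔ ∀ i j,
      ((g : SL(2, ℝ)) : Matrix (Fin 2) (Fin 2) ℝ) i j - (1 : Matrix (Fin 2) (Fin 2) ℝ) i j
        ∈ twoLambda q := by
  rw [reductionModTwo, MonoidHom.comp_apply, map_mk_eq_one_iff]
  refine forall₂_congr fun i j => ?_
  rw [mem_span_two_iff, AddSubgroupClass.coe_sub, coe_heckeLift_apply, Matrix.one_apply,
    Matrix.one_apply]
  split_ifs <;> rfl

lemma reductionModTwo_mem_lowerTriangular_iff (g : HeckeSL q) :
    reductionModTwo q g ∈ lowerTriangular (heckeRingModTwo q) ↔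
      ((g : SL(2, ℝ)) : Matrix (Fin 2) (Fin 2) ℝ) 0 1 ∈ twoLambda q := by
  rw [← coe_heckeLift_apply, ← mem_span_two_iff, ← Ideal.Quotient.eq_zero_iff_mem]
  change (reductionModTwo q g) 0 1 = 0 ↔ _
  rfl

noncomputable def heckeS : HeckeSL q := ⟨Smat, Subgroup.subset_closure (Set.mem_insert _ _)⟩

noncomputable def heckeT : HeckeSL q :=
  ⟨Tmat q, Subgroup.subset_closure (Set.mem_insert_of_mem _ rfl)⟩

lemma coe_heckeS : ((heckeS q : SL(2, ℝ)) : Matrix (Fin 2) (Fin 2) ℝ) = !![0, 1; -1, 0] := rfl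

lemma coe_heckeT :
    ((heckeT q : SL(2, ℝ)) : Matrix (Fin 2) (Fin 2) ℝ) = !![1, 2 * cos (π / q); 0, 1] := rfl

lemma closure_heckeS_heckeT : Subgroup.closure {heckeS q, heckeT q} = ⊤ := by
  refine Eq.trans ?_ (Subgroup.closure_closure_coe_preimage (k := {Smat, Tmat q}))
  congr 1
  ext g
  simp [heckeS, heckeT, Subtype.ext_iff]
  rfl

lemma range_reductionModTwo : (reductionModTwo q).range =
    Subgroup.closure {reductionModTwo q (heckeS q), reductionModTwo q (heckeT q)} := by
  rw [MonoidHom.range_eq_map, ← closure_heckeS_heckeT, MonoidHom.map_closure, Set.image_pair]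

lemma reductionModTwo_heckeS_mul_self :
    reductionModTwo q (heckeS q) * reductionModTwo q (heckeS q) = 1 := by
  rw [← map_mul, reductionModTwo_eq_one_iff]
  intro i j
  fin_cases i <;> fin_cases j <;> simp [coe_heckeS]
  all_goals exact ⟨-1, neg_mem (one_mem _), by norm_num⟩

lemma reductionModTwo_heckeT_mul_self :
    reductionModTwo q (heckeT q) * reductionModTwo q (heckeT q) = 1 := by
  rw [← map_mul, reductionModTwo_eq_one_iff]
  intro i j
  fin_cases i <;> fin_cases j <;> simp [coe_heckeT]
  exact ⟨_, two_mul_cos_mem_heckeRing q, by ring⟩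

lemma reductionModTwo_heckeS_notMem :
    reductionModTwo q (heckeS q) ∉ lowerTriangular (heckeRingModTwo q) := by
  rw [reductionModTwo_mem_lowerTriangular_iff]
  simpa [coe_heckeS] using one_notMem_twoLambda q

lemma reductionModTwo_heckeS_mul_heckeT_notMem :
    reductionModTwo q (heckeS q * heckeT q) ∉ lowerTriangular (heckeRingModTwo q) := by
  rw [reductionModTwo_mem_lowerTriangular_iff]
  simpa [coe_heckeS, coe_heckeT] using one_notMem_twoLambda q

lemma reductionModTwo_heckeS_mul_heckeT_mul_heckeS_mem :
    reductionModTwo q (heckeS q * heckeT q * heckeS q) ∈ lowerTriangular (heckeRingModTwo q) := by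
  rw [reductionModTwo_mem_lowerTriangular_iff]
  simp [coe_heckeS, coe_heckeT]

lemma heckeS_mul_heckeT_pow (hodd : Odd q) (hq2 : 2 ≤ q) : (heckeS q * heckeT q) ^ q = 1 := by
  have hM : ((heckeS q * heckeT q : HeckeSL q) : Matrix (Fin 2) (Fin 2) ℝ) =
      -!![0, -1; 1, 2 * cos (π / q)] := by
    simp [coe_heckeS, coe_heckeT]
  refine Subtype.ext (Subtype.ext ?_)
  rw [Subgroup.coe_pow, coe_pow, hM, hodd.neg_pow,
    Matrix.pow_eq_neg_one_of_trace_eq_two_mul_cos _ hq2, neg_neg]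
  all_goals simp [Matrix.det_fin_two, Matrix.trace_fin_two]

lemma orderOf_reductionModTwo_heckeS_mul_heckeT (hq : q.Prime) (hq2 : q ≠ 2) :
    orderOf (reductionModTwo q (heckeS q) * reductionModTwo q (heckeT q)) = q := by
  have := Fact.mk hq
  rw [← map_mul]
  refine orderOf_eq_prime ?_ fun h => reductionModTwo_heckeS_mul_heckeT_notMem q (h ▸ one_mem _)
  rw [← map_pow, heckeS_mul_heckeT_pow q (hq.odd_of_ne_two hq2) hq.two_le, map_one]

end Hecke

open Hecke Matrix.SpecialLinearGroup Subgroup in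
/-- Proposition 5.4 and (5.8): for prime `q ≥ 3`, the principal congruence subgroup of
level 2 (matrices `≡ ±I mod 2 ℤ[λ_q]`) has index `2q` in `G_q`, and `G₀(2)` (matrices
whose upper-right entry is `≡ 0 mod 2 ℤ[λ_q]`) has index `q`. -/
theorem stmt_19 (q : ℕ) (hq : q.Prime) (hq3 : 3 ≤ q) :
    (∀ H : Subgroup (HeckeSL q),
      (∀ x : HeckeSL q, x ∈ H ↔ ∀ i j,
        (((x : Matrix.SpecialLinearGroup (Fin 2) ℝ) : Matrix (Fin 2) (Fin 2) ℝ) i j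
          - (1 : Matrix (Fin 2) (Fin 2) ℝ) i j) ∈ twoLambda q) →
      H.index = 2 * q) ∧
    (∀ K : Subgroup (HeckeSL q),
      (∀ x : HeckeSL q, x ∈ K ↔
        ((x : Matrix.SpecialLinearGroup (Fin 2) ℝ) : Matrix (Fin 2) (Fin 2) ℝ) 0 1
          ∈ twoLambda q) →
      K.index = q) := by
  have hs := reductionModTwo_heckeS_mul_self q
  have ht := reductionModTwo_heckeT_mul_self q
  have hord := orderOf_reductionModTwo_heckeS_mul_heckeT q hq (by omega)
  have hsC := notMem_zpowers_of_odd_orderOf hs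
    (fun h => reductionModTwo_heckeS_notMem q (h ▸ one_mem _)) (hord ▸ hq.odd_of_ne_two (by omega))
  refine ⟨fun H hH => ?_, fun K hK => ?_⟩
  · have hker : H = (reductionModTwo q).ker := by
      ext x
      rw [hH, MonoidHom.mem_ker, reductionModTwo_eq_one_iff]
    rw [hker, index_ker, range_reductionModTwo, card_closure_pair_of_involutions hs ht hsC, hord]
  · have hcomap : K = (lowerTriangular (heckeRingModTwo q)).comap (reductionModTwo q) := by
      ext x
      rw [hK, mem_comap, reductionModTwo_mem_lowerTriangular_iff]
    rw [hcomap, index_comap, range_reductionModTwo,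
      relIndex_closure_pair_eq_orderOf_mul hs ht hsC (by rwa [hord])
        (map_mul (reductionModTwo q) _ _ ▸ reductionModTwo_heckeS_mul_heckeT_notMem q)
        (by simpa using reductionModTwo_heckeS_mul_heckeT_mul_heckeS_mem q), hord]
end
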